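/- Key differentiation identity (Lemma 4.2): if f^♥, f^♠ solve f' = V(x,λ)f and g^♥, g^♠ solve g' = V(x,μ)g for the Dirac system, then f₁^♥ f₁^♠ g₂^♠ g₂^♥ − f₂^♠ f₂^♥ g₁^♥ g₁^♠ = (1/(i(μ−λ))) · d/dx [ ((f^♥)ᵀ J g^♥) · ((f^♠)ᵀ J g^♠) ], where J = [[0,1],[−1,0]]. -/

import Mathlib

open Complex Matrix ComplexConjugate

/-- The Dirac potential matrix `V(x,λ) = −(iλ/2)σ₃ + Y₀(x)`. -/
noncomputable def diracV (ψ : ℝ → ℂ) (x : ℝ) (l : ℂ) : Matrix (Fin 2) (Fin 2) ℂ :=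
  !![-(I * l / 2), conj (ψ x); ψ x, I * l / 2]

/-- `fᵀ J g = f₁ g₂ − f₂ g₁` with `J = [[0,1],[−1,0]]`. -/
def Jpair (f g : Fin 2 → ℂ) : ℂ := f 0 * g 1 - f 1 * g 0

/-!
Along solutions of the Dirac system at spectral parameters `λ` and `μ`, the potential drops
out of the derivative of the pairing `fᵀ J g`, since `Y₀ᵀ J + J Y₀ = 0`; what is left is
`i(μ − λ)/2 · (f₁ g₂ + f₂ g₁)`. Writing `a = f₁^♥ g₂^♥`, `b = f₂^♥ g₁^♥` and `c`, `d` likewise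
for `♠`, the product rule then gives
`i(μ − λ)/2 · ((a + b)(c − d) + (a − b)(c + d)) = i(μ − λ)(ac − bd)`.
-/

theorem hasDerivAt_Jpair {f g : ℝ → Fin 2 → ℂ} {f' g' : Fin 2 → ℂ} {x : ℝ}
    (hf : HasDerivAt f f' x) (hg : HasDerivAt g g' x) :
    HasDerivAt (fun t => Jpair (f t) (g t)) (Jpair f' (g x) + Jpair (f x) g') x := by
  rw [hasDerivAt_pi] at hf hg
  exact (((hf 0).mul (hg 1)).sub ((hf 1).mul (hg 0))).congr_deriv (by simp only [Jpair]; ring)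

theorem Jpair_diracV_mulVec_add (ψ : ℝ → ℂ) (x : ℝ) (l m : ℂ) (u v : Fin 2 → ℂ) :
    Jpair (diracV ψ x l *ᵥ u) v + Jpair u (diracV ψ x m *ᵥ v) =
      I * (m - l) / 2 * (u 0 * v 1 + u 1 * v 0) := by
  simp only [Jpair, diracV, mulVec, dotProduct, Fin.sum_univ_two, of_apply, cons_val',
    cons_val_zero, cons_val_one, empty_val', cons_val_fin_one]
  ring

theorem hasDerivAt_Jpair_of_dirac {ψ : ℝ → ℂ} {l m : ℂ} {f g : ℝ → Fin 2 → ℂ} {x : ℝ}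
    (hf : HasDerivAt f (diracV ψ x l *ᵥ f x) x) (hg : HasDerivAt g (diracV ψ x m *ᵥ g x) x) :
    HasDerivAt (fun t => Jpair (f t) (g t)) (I * (m - l) / 2 * (f x 0 * g x 1 + f x 1 * g x 0))
      x := by
  simpa only [Jpair_diracV_mulVec_add] using hasDerivAt_Jpair hf hg

theorem dirac_key_identity_general (ψ : ℝ → ℂ) (l m : ℂ)
    (fh fs gh gs : ℝ → Fin 2 → ℂ)
    (hfh : ∀ x : ℝ, HasDerivAt fh (diracV ψ x l *ᵥ fh x) x)
    (hfs : ∀ x : ℝ, HasDerivAt fs (diracV ψ x l *ᵥ fs x) x)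
    (hgh : ∀ x : ℝ, HasDerivAt gh (diracV ψ x m *ᵥ gh x) x)
    (hgs : ∀ x : ℝ, HasDerivAt gs (diracV ψ x m *ᵥ gs x) x) :
    ∀ x : ℝ,
      HasDerivAt (fun t => Jpair (fh t) (gh t) * Jpair (fs t) (gs t))
        (I * (m - l) *
          (fh x 0 * fs x 0 * gs x 1 * gh x 1 -
            fs x 1 * fh x 1 * gh x 0 * gs x 0)) x := by
  intro x
  exact ((hasDerivAt_Jpair_of_dirac (hfh x) (hgh x)).mul
    (hasDerivAt_Jpair_of_dirac (hfs x) (hgs x))).congr_deriv (by simp only [Jpair]; ring)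

theorem dirac_key_identity (ψ : ℝ → ℂ) (hψ : Continuous ψ) (l m : ℂ)
    (hlm : l ≠ m)
    (fh fs gh gs : ℝ → Fin 2 → ℂ)
    (hfh : ∀ x : ℝ, HasDerivAt fh (diracV ψ x l *ᵥ fh x) x)
    (hfs : ∀ x : ℝ, HasDerivAt fs (diracV ψ x l *ᵥ fs x) x)
    (hgh : ∀ x : ℝ, HasDerivAt gh (diracV ψ x m *ᵥ gh x) x)
    (hgs : ∀ x : ℝ, HasDerivAt gs (diracV ψ x m *ᵥ gs x) x) :
    ∀ x : ℝ,
      HasDerivAt (fun t => Jpair (fh t) (gh t) * Jpair (fs t) (gs t))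
        (I * (m - l) *
          (fh x 0 * fs x 0 * gs x 1 * gh x 1 -
            fs x 1 * fh x 1 * gh x 0 * gs x 0)) x :=
  dirac_key_identity_general ψ l m fh fs gh gs hfh hfs hgh hgs
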